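/- Let n be a nonnegative integer, d > 0, a and c real, and set κ = 1 + c/√(2d) and B = a/(n + κ), assuming n + κ ≠ 0. Then for every twice continuously differentiable function y : ℝ → ℝ and every x ∈ ℝ, x²·y″(x) + 2(Bx² + κx + √(2d))·y′(x) − 2nB·x·y(x) = (J⁰J⁰y)(x) − 2B·(J⁺y)(x) + (n + 1 + 2c/√(2d))·(J⁰y)(x) + 2√(2d)·(J⁻y)(x) + (n/4)·(n + 2 + 4c/√(2d))·y(x). -/

import Mathlib

/-- `(J⁺y)(x) = -x²y'(x) + n x y(x)` -/
noncomputable def Jp (n : ℕ) (y : ℝ → ℝ) : ℝ → ℝ :=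
  fun x => -x ^ 2 * deriv y x + (n : ℝ) * x * y x

/-- `(J⁰y)(x) = x y'(x) - (n/2) y(x)` -/
noncomputable def J0 (n : ℕ) (y : ℝ → ℝ) : ℝ → ℝ :=
  fun x => x * deriv y x - ((n : ℝ) / 2) * y x

/-- `(J⁻y)(x) = y'(x)` -/
noncomputable def Jm (y : ℝ → ℝ) : ℝ → ℝ := fun x => deriv y x

/-! Since `J⁰J⁰y = x²y″ + (1 - n)xy′ + (n²/4)y`, both sides are combinations of `y″`, `y′`, `y`
with polynomial coefficients, and comparing them is a ring identity in `c/√(2d)`. -/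

theorem deriv_J0 (n : ℕ) {y : ℝ → ℝ} {x : ℝ} (hy : DifferentiableAt ℝ y x)
    (hy' : DifferentiableAt ℝ (deriv y) x) :
    deriv (J0 n y) x = x * deriv (deriv y) x + (1 - (n : ℝ) / 2) * deriv y x := by
  have h : HasDerivAt (J0 n y)
      (1 * deriv y x + x * deriv (deriv y) x - (n : ℝ) / 2 * deriv y x) x :=
    ((hasDerivAt_id x).mul hy'.hasDerivAt).sub (hy.hasDerivAt.const_mul _)
  rw [h.deriv]
  ring

theorem J0_J0_apply (n : ℕ) {y : ℝ → ℝ} {x : ℝ} (hy : DifferentiableAt ℝ y x)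
    (hy' : DifferentiableAt ℝ (deriv y) x) :
    J0 n (J0 n y) x
      = x ^ 2 * deriv (deriv y) x + (1 - n) * x * deriv y x + ((n : ℝ) / 2) ^ 2 * y x := by
  rw [J0, deriv_J0 n hy hy', J0]
  ring

theorem inverse_quartic_sl2_general (n : ℕ) (d c : ℝ)
    (κ B : ℝ) (hκ : κ = 1 + c / Real.sqrt (2 * d))
    (y : ℝ → ℝ) (hy : ContDiff ℝ 2 y) (x : ℝ) :
    x ^ 2 * deriv (deriv y) x
      + 2 * (B * x ^ 2 + κ * x + Real.sqrt (2 * d)) * deriv y x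
      - 2 * (n : ℝ) * B * x * y x
    = J0 n (J0 n y) x - 2 * B * Jp n y x
      + ((n : ℝ) + 1 + 2 * c / Real.sqrt (2 * d)) * J0 n y x
      + 2 * Real.sqrt (2 * d) * Jm y x
      + ((n : ℝ) / 4) * ((n : ℝ) + 2 + 4 * c / Real.sqrt (2 * d)) * y x := by
  have hy₁ : Differentiable ℝ y := hy.differentiable two_ne_zero
  have hy₂ : Differentiable ℝ (deriv y) := (hy.iterate_deriv' 1 1).differentiable one_ne_zero
  rw [J0_J0_apply n (hy₁ x) (hy₂ x), hκ]
  simp only [J0, Jp, Jm]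
  ring

/-- sl(2) algebraization of the Stäckel-transformed Hamiltonian of the
inverse quartic power potential, with `κ = 1 + c/√(2d)`, `B = a/(n + κ)`. -/
theorem inverse_quartic_sl2 (n : ℕ) (d a c : ℝ) (hd : 0 < d)
    (κ B : ℝ) (hκ : κ = 1 + c / Real.sqrt (2 * d))
    (hne : (n : ℝ) + κ ≠ 0) (hB : B = a / ((n : ℝ) + κ))
    (y : ℝ → ℝ) (hy : ContDiff ℝ 2 y) (x : ℝ) :
    x ^ 2 * deriv (deriv y) x
      + 2 * (B * x ^ 2 + κ * x + Real.sqrt (2 * d)) * deriv y x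
      - 2 * (n : ℝ) * B * x * y x
    = J0 n (J0 n y) x - 2 * B * Jp n y x
      + ((n : ℝ) + 1 + 2 * c / Real.sqrt (2 * d)) * J0 n y x
      + 2 * Real.sqrt (2 * d) * Jm y x
      + ((n : ℝ) / 4) * ((n : ℝ) + 2 + 4 * c / Real.sqrt (2 * d)) * y x :=
  inverse_quartic_sl2_general n d c κ B hκ y hy x
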